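/- arXiv:2008.06689 — 2 statements merged into one kernel-verified Lean document; each statement's English description precedes it below -/
import Mathlib

section
/- Under the hypotheses of the preceding setup, the map w ↦ w^k restricted to the arc R is injective. -/
open Set

/-- A simple arc in `ℂ`: homeomorphic image of `[0,1]`. -/
def IsSimpleArc (A : Set ℂ) : Prop :=
  ∃ ξ : ℝ → ℂ, ContinuousOn ξ (Icc 0 1) ∧ InjOn ξ (Icc 0 1) ∧ ξ '' Icc 0 1 = A

/-- `a` is an endpoint of the simple arc `A`. -/
def IsArcEndpoint (a : ℂ) (A : Set ℂ) : Prop :=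
  ∃ ξ : ℝ → ℂ, ContinuousOn ξ (Icc 0 1) ∧ InjOn ξ (Icc 0 1) ∧ ξ '' Icc 0 1 = A ∧ ξ 0 = a

/-!
Parametrize `R` by `ξ` with `ξ 0 = 0` and `R'` by `η`. On `(0, 1]` the curve `ξ` avoids `0`, where
`w ↦ w ^ k` is a local biholomorphism, so `t ↦ ξ t ^ k` is continuous and locally injective there.
Read through the homeomorphism `η : [0, 1] ≃ R'`, it becomes a continuous, locally injective real
function on an interval, which is injective: otherwise it would take equal values at two points,
hence, by Rolle's theorem, have an extremum strictly between them, where it is locally strictly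
monotone. The point `0` is the only preimage of `0` under `w ↦ w ^ k`.
-/

open Filter Topology

def LocallyInjOn {α β : Type*} [TopologicalSpace α] (f : α → β) (s : Set α) : Prop :=
  ∀ x ∈ s, ∃ U ∈ 𝓝[s] x, InjOn f U

theorem HasStrictDerivAt.exists_mem_nhds_injOn {𝕜 : Type*} [NontriviallyNormedField 𝕜]
    [CompleteSpace 𝕜] {f : 𝕜 → 𝕜} {f' a : 𝕜} (hf : HasStrictDerivAt f f' a) (hf' : f' ≠ 0) :
    ∃ U ∈ 𝓝 a, InjOn f U := by
  obtain ⟨U, hU, hinv⟩ := (hf.eventually_left_inverse hf').exists_mem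
  exact ⟨U, hU, LeftInvOn.injOn hinv⟩

theorem exists_mem_nhds_injOn_pow {𝕜 : Type*} [NontriviallyNormedField 𝕜] [CompleteSpace 𝕜]
    [CharZero 𝕜] {k : ℕ} (hk : k ≠ 0) {w : 𝕜} (hw : w ≠ 0) :
    ∃ U ∈ 𝓝 w, InjOn (· ^ k) U :=
  (hasStrictDerivAt_pow k w).exists_mem_nhds_injOn
    (mul_ne_zero (Nat.cast_ne_zero.2 hk) (pow_ne_zero _ hw))

section Interval

variable {X Y Z : Type*}
  [ConditionallyCompleteLinearOrder X] [DenselyOrdered X] [TopologicalSpace X] [OrderTopology X]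
  [LinearOrder Y] [TopologicalSpace Y] [OrderTopology Y] [TopologicalSpace Z]
  {s : Set X}

theorem Set.OrdConnected.injOn_of_locallyInjOn (hs : s.OrdConnected) {f : X → Y}
    (hf : ContinuousOn f s) (hloc : LocallyInjOn f s) : InjOn f s := by
  intro a ha b hb hab
  by_contra hne
  wlog hlt : a < b generalizing a b
  · exact this hb ha hab.symm (Ne.symm hne) ((not_lt.1 hlt).lt_of_ne' hne)
  have hab_s : Icc a b ⊆ s := hs.out ha hb
  obtain ⟨c, hc, hext⟩ := exists_Ioo_extr_on_Icc hlt (hf.mono hab_s) hab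
  have hs_nhds : s ∈ 𝓝 c :=
    mem_of_superset (Ioo_mem_nhds hc.1 hc.2) (Ioo_subset_Icc_self.trans hab_s)
  obtain ⟨U, hU, hinj⟩ := hloc c (mem_of_mem_nhds hs_nhds)
  rw [nhdsWithin_eq_nhds.2 hs_nhds] at hU
  obtain ⟨l, u, hlu, hlu_sub⟩ := (mem_nhds_iff_exists_Ioo_subset' ⟨a, hc.1⟩ ⟨b, hc.2⟩).1
    (inter_mem hU (Ioo_mem_nhds hc.1 hc.2))
  obtain ⟨a', hla', ha'c⟩ := exists_between hlu.1
  obtain ⟨b', hcb', hb'u⟩ := exists_between hlu.2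
  have hsub : Icc a' b' ⊆ U ∩ Ioo a b := (Icc_subset_Ioo hla' hb'u).trans hlu_sub
  have hIcc_ab : Icc a' b' ⊆ Icc a b := fun x hx => Ioo_subset_Icc_self (hsub hx).2
  have ha' : a' ∈ Icc a' b' := left_mem_Icc.2 (ha'c.trans hcb').le
  have hb' : b' ∈ Icc a' b' := right_mem_Icc.2 (ha'c.trans hcb').le
  have hc' : c ∈ Icc a' b' := ⟨ha'c.le, hcb'.le⟩
  rcases (hf.mono (hIcc_ab.trans hab_s)).strictMonoOn_of_injOn_Icc' (ha'c.trans hcb').le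
      (hinj.mono fun x hx => (hsub hx).1) with hmono | hanti <;> rcases hext with hmin | hmax
  · exact (hmono ha' hc' ha'c).not_ge (hmin (hIcc_ab ha'))
  · exact (hmono hc' hb' hcb').not_ge (hmax (hIcc_ab hb'))
  · exact (hanti hc' hb' hcb').not_ge (hmin (hIcc_ab hb'))
  · exact (hanti ha' hc' ha'c).not_ge (hmax (hIcc_ab ha'))

theorem Set.OrdConnected.injOn_of_locallyInjOn_of_mapsTo_range (hs : s.OrdConnected)
    [Nonempty Y] {e : Y → Z} (he : IsInducing e) {f : X → Z} (hf : ContinuousOn f s)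
    (hloc : LocallyInjOn f s) (hfe : MapsTo f s (range e)) : InjOn f s := by
  set g := Function.invFun e ∘ f
  have hge : EqOn (e ∘ g) f s := fun x hx => Function.invFun_eq (hfe hx)
  have hg : ContinuousOn g s := he.continuousOn_iff.2 (hf.congr hge)
  have hgloc : LocallyInjOn g s := fun x hx => by
    obtain ⟨U, hU, hinj⟩ := hloc x hx
    refine ⟨U ∩ s, inter_mem hU self_mem_nhdsWithin, fun p hp q hq hpq => hinj hp.1 hq.1 ?_⟩
    rw [← hge hp.2, ← hge hq.2, Function.comp_apply, hpq]
    rfl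
  exact fun p hp q hq hpq =>
    hs.injOn_of_locallyInjOn hg hgloc hp hq (congrArg (Function.invFun e) hpq)

theorem Set.OrdConnected.injOn_of_locallyInjOn_of_mapsTo_simpleArc (hs : s.OrdConnected)
    {f : X → ℂ} (hf : ContinuousOn f s) (hloc : LocallyInjOn f s) {A : Set ℂ}
    (hA : IsSimpleArc A) (hfA : MapsTo f s A) : InjOn f s := by
  obtain ⟨η, hηc, hηi, rfl⟩ := hA
  have : Fact ((0 : ℝ) ≤ 1) := ⟨zero_le_one⟩
  have he : IsClosedEmbedding ((Icc 0 1).domRestrict η) :=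
    hηc.domRestrict.isClosedEmbedding hηi.injective
  exact hs.injOn_of_locallyInjOn_of_mapsTo_range he.isInducing hf hloc
    (by rwa [range_domRestrict])

end Interval

/-- if `R` is a simple arc with endpoint `0` and its image under `w ↦ w^k`
(`k > 1` an integer) is also a simple arc, then `w ↦ w^k` is injective on `R`. -/
theorem pow_injOn_arc
    (k : ℕ) (hk : 1 < k) (R : Set ℂ)
    (hR : IsArcEndpoint 0 R)
    (hR' : IsSimpleArc ((fun w => w ^ k) '' R)) :
    Set.InjOn (fun w => w ^ k) R := by
  obtain ⟨ξ, hξc, hξi, rfl, hξ0⟩ := hR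
  have hk0 : k ≠ 0 := by omega
  have hξ_ne : ∀ t ∈ Ioc (0 : ℝ) 1, ξ t ≠ 0 := fun t ht h =>
    ht.1.ne' (hξi (Ioc_subset_Icc_self ht) (left_mem_Icc.2 zero_le_one) (h.trans hξ0.symm))
  have hloc : LocallyInjOn (fun t => ξ t ^ k) (Ioc 0 1) := fun t ht => by
    obtain ⟨U, hU, hinj⟩ := exists_mem_nhds_injOn_pow hk0 (hξ_ne t ht)
    have hξU : ξ ⁻¹' U ∈ 𝓝[Ioc 0 1] t :=
      nhdsWithin_mono _ Ioc_subset_Icc_self (hξc t (Ioc_subset_Icc_self ht) hU)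
    exact ⟨ξ ⁻¹' U ∩ Ioc 0 1, inter_mem hξU self_mem_nhdsWithin,
      hinj.comp (hξi.mono fun x hx => Ioc_subset_Icc_self hx.2) fun x hx => hx.1⟩
  have hinj : InjOn (fun t => ξ t ^ k) (Ioc 0 1) :=
    ordConnected_Ioc.injOn_of_locallyInjOn_of_mapsTo_simpleArc
      ((hξc.mono Ioc_subset_Icc_self).pow k) hloc hR'
      fun t ht => mem_image_of_mem _ (mem_image_of_mem ξ (Ioc_subset_Icc_self ht))
  have h0 : (0 : ℂ) ∉ ξ '' Ioc 0 1 := fun ⟨t, ht, h⟩ => hξ_ne t ht h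
  rw [← Ioc_insert_left zero_le_one, image_insert_eq, hξ0, injOn_insert h0]
  refine ⟨hinj.image_of_comp, fun ⟨w, hw, hwk⟩ => ?_⟩
  rw [zero_pow hk0, pow_eq_zero_iff hk0] at hwk
  exact h0 (hwk ▸ hw)
end

section
/- Let R' and L' be simple arcs in ℂ with common endpoint 0 and otherwise disjoint, and suppose λ ∈ ℂ with |λ| > 1 satisfies λR' ⊇ R' and λL' ⊇ L'. If R' ∪ L' is smooth except possibly at 0, then R' ∪ L' is a quasi-arc. -/
/-!
Multiplication by `λ⁻¹` maps each of `R'` and `L'` into itself, so along the arc it is conjugate to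
an increasing self-map `h` of the parameter interval `[-1, 1]` fixing `0`. Scaling by a power of
`λ` does not change ratios of distances, so a triple of parameters may be pulled back along the
largest iterate `h^[k]` whose image contains it. The pulled-back triple is not contained in
`h([-1, 1])`: it either lies in one of the windows `[-1, h(-1)/2]`, `[h(1)/2, 1]`, where the arc is
`C¹` with nonvanishing derivative and hence bi-Lipschitz, or its outer points are a fixed
parameter distance apart, where injectivity and compactness bound the ratio. The resulting
three-point condition for `ξ` passes to every parametrization, since reparametrizations of an arc
are monotone.
-/

open Set

/-- The quasi-arc inequality for a parametrization `ξ` on `[0,1]` with constant `C`. -/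
def IsQuasiArcParam (C : ℝ) (ξ : ℝ → ℂ) : Prop :=
  ∀ x y z : ℝ, x ∈ Icc (0:ℝ) 1 → y ∈ Icc (0:ℝ) 1 → z ∈ Icc (0:ℝ) 1 → x ≤ y → y ≤ z →
    C * ‖ξ x - ξ y‖ ≤ ‖ξ x - ξ z‖

/-- A quasi-arc: a simple arc such that every parametrization satisfies the
quasi-arc inequality with a uniform constant `C > 0`. -/
def IsQuasiArc (A : Set ℂ) : Prop :=
  IsSimpleArc A ∧ ∃ C : ℝ, 0 < C ∧ ∀ ξ : ℝ → ℂ,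
    ContinuousOn ξ (Icc 0 1) → InjOn ξ (Icc 0 1) → ξ '' Icc 0 1 = A → IsQuasiArcParam C ξ

section ThreePoint

variable {E : Type*} [SeminormedAddCommGroup E]

/-- Both orders `x, y, z` and `z, y, x` are required so that the condition survives reversing a
parametrization. -/
def ThreePoint (C : ℝ) (x y z : E) : Prop :=
  C * ‖x - y‖ ≤ ‖x - z‖ ∧ C * ‖z - y‖ ≤ ‖z - x‖

def ThreePointOn (C : ℝ) (ξ : ℝ → E) (s : Set ℝ) : Prop :=
  ∀ x ∈ s, ∀ y ∈ s, ∀ z ∈ s, x ≤ y → y ≤ z → ThreePoint C (ξ x) (ξ y) (ξ z)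

theorem ThreePoint.symm {C : ℝ} {x y z : E} (h : ThreePoint C x y z) : ThreePoint C z y x :=
  ⟨h.2, h.1⟩

theorem ThreePoint.mono {C C' : ℝ} {x y z : E} (hC : C' ≤ C) (h : ThreePoint C x y z) :
    ThreePoint C' x y z :=
  ⟨(mul_le_mul_of_nonneg_right hC (norm_nonneg _)).trans h.1,
    (mul_le_mul_of_nonneg_right hC (norm_nonneg _)).trans h.2⟩

theorem ThreePoint.smul {𝕜 : Type*} [NormedField 𝕜] [NormedSpace 𝕜 E] {C : ℝ} {x y z : E}
    (h : ThreePoint C x y z) (c : 𝕜) :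
    ThreePoint C (c • x) (c • y) (c • z) := by
  simp only [ThreePoint, ← smul_sub, norm_smul, mul_left_comm C]
  exact ⟨mul_le_mul_of_nonneg_left h.1 (norm_nonneg c),
    mul_le_mul_of_nonneg_left h.2 (norm_nonneg c)⟩

end ThreePoint

theorem IsCompact.continuousOn_invFunOn {X Y : Type*} [TopologicalSpace X] [Nonempty X]
    [TopologicalSpace Y] [T2Space Y] {f : X → Y} {K : Set X} (hK : IsCompact K)
    (hf : ContinuousOn f K) (hi : InjOn f K) :
    ContinuousOn (Function.invFunOn f K) (f '' K) := by
  refine continuousOn_iff_isClosed.2 fun t ht => ⟨f '' (K ∩ t),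
    ((hK.inter_right ht).image_of_continuousOn (hf.mono inter_subset_left)).isClosed, ?_⟩
  ext y
  constructor
  · rintro ⟨hy, x, hx, rfl⟩
    rw [mem_preimage, hi.leftInvOn_invFunOn hx] at hy
    exact ⟨⟨x, ⟨hx, hy⟩, rfl⟩, x, hx, rfl⟩
  · rintro ⟨⟨x, ⟨hx, hxt⟩, rfl⟩, hy⟩
    exact ⟨by rwa [mem_preimage, hi.leftInvOn_invFunOn hx], hy⟩

theorem isQuasiArcParam_of_threePointOn {a b C : ℝ} {ξ η : ℝ → ℂ}
    (hξc : ContinuousOn ξ (Icc a b)) (hξi : InjOn ξ (Icc a b)) (hξ : ThreePointOn C ξ (Icc a b))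
    (hηc : ContinuousOn η (Icc 0 1)) (hηi : InjOn η (Icc 0 1))
    (hη : η '' Icc 0 1 = ξ '' Icc a b) : IsQuasiArcParam C η := by
  set φ := Function.invFunOn ξ (Icc a b) ∘ η
  have hηmaps : MapsTo η (Icc 0 1) (ξ '' Icc a b) := hη ▸ mapsTo_image η _
  have hφmaps : MapsTo φ (Icc 0 1) (Icc a b) :=
    (surjOn_image ξ _).mapsTo_invFunOn.comp hηmaps
  have hξφ : EqOn (ξ ∘ φ) η (Icc 0 1) := fun x hx =>
    (surjOn_image ξ _).rightInvOn_invFunOn (hηmaps hx)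
  have hφc : ContinuousOn φ (Icc 0 1) :=
    (isCompact_Icc.continuousOn_invFunOn hξc hξi).comp hηc hηmaps
  have hφi : InjOn φ (Icc 0 1) := fun x hx y hy hxy =>
    hηi hx hy (by rw [← hξφ hx, ← hξφ hy, Function.comp_apply, hxy]; rfl)
  intro x y z hx hy hz hxy hyz
  rw [← hξφ hx, ← hξφ hy, ← hξφ hz]
  rcases hφc.strictMonoOn_of_injOn_Icc' zero_le_one hφi with hmono | hanti
  · exact (hξ _ (hφmaps hx) _ (hφmaps hy) _ (hφmaps hz)
      (hmono.monotoneOn hx hy hxy) (hmono.monotoneOn hy hz hyz)).1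
  · exact (hξ _ (hφmaps hz) _ (hφmaps hy) _ (hφmaps hx)
      (hanti.antitoneOn hy hz hyz) (hanti.antitoneOn hx hy hxy)).symm.1

theorem isSimpleArc_image {a b : ℝ} (hab : a < b) {ξ : ℝ → ℂ} (hc : ContinuousOn ξ (Icc a b))
    (hi : InjOn ξ (Icc a b)) : IsSimpleArc (ξ '' Icc a b) := by
  have hφ : (fun x => (b - a) * x + a) '' Icc 0 1 = Icc a b := by
    rw [image_affine_Icc' (sub_pos.2 hab)]; congr 1 <;> ring
  have hφmaps : MapsTo (fun x => (b - a) * x + a) (Icc 0 1) (Icc a b) := hφ ▸ mapsTo_image _ _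
  refine ⟨ξ ∘ fun x => (b - a) * x + a, hc.comp (by fun_prop) hφmaps,
    hi.comp ?_ hφmaps, by rw [image_comp, hφ]⟩
  intro x _ y _ hxy
  simpa [(sub_pos.2 hab).ne'] using hxy

theorem isQuasiArc_image_of_threePointOn {a b C : ℝ} (hab : a < b) {ξ : ℝ → ℂ}
    (hc : ContinuousOn ξ (Icc a b)) (hi : InjOn ξ (Icc a b)) (hC : 0 < C)
    (hξ : ThreePointOn C ξ (Icc a b)) : IsQuasiArc (ξ '' Icc a b) :=
  ⟨isSimpleArc_image hab hc hi, C, hC, fun _ hηc hηi hη =>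
    isQuasiArcParam_of_threePointOn hc hi hξ hηc hηi hη⟩

theorem IsCompact.exists_pos_le_dist_of_le_dist {X Y : Type*} [PseudoMetricSpace X]
    [MetricSpace Y] {f : X → Y} {K : Set X} (hK : IsCompact K) (hf : ContinuousOn f K)
    (hi : InjOn f K) {δ : ℝ} (hδ : 0 < δ) :
    ∃ ε > 0, ∀ x ∈ K, ∀ y ∈ K, δ ≤ dist x y → ε ≤ dist (f x) (f y) := by
  set S := K ×ˢ K ∩ {p : X × X | δ ≤ dist p.1 p.2}
  have hS : IsCompact S := (hK.prod hK).inter_right (isClosed_le continuous_const continuous_dist)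
  have hF : ContinuousOn (fun p : X × X => dist (f p.1) (f p.2)) S :=
    continuous_dist.comp_continuousOn <| ContinuousOn.prodMk
      (hf.comp continuousOn_fst fun _ hp => hp.1.1) (hf.comp continuousOn_snd fun _ hp => hp.1.2)
  obtain ⟨ε, hε, hεle⟩ := hS.exists_forall_le' hF (a := 0) fun p ⟨⟨h1, h2⟩, hp⟩ =>
    dist_pos.2 fun hfp => by
      rw [mem_ofPred_eq, hi h1 h2 hfp, dist_self] at hp
      exact hδ.not_ge hp
  exact ⟨ε, hε, fun x hx y hy hxy => hεle (x, y) ⟨⟨hx, hy⟩, hxy⟩⟩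

theorem IsCompact.exists_threePoint_of_le_sub {E : Type*} [NormedAddCommGroup E] {ξ : ℝ → E}
    {K : Set ℝ} (hK : IsCompact K) (hc : ContinuousOn ξ K) (hi : InjOn ξ K) {δ : ℝ}
    (hδ : 0 < δ) : ∃ C > 0, ∀ x ∈ K, ∀ y ∈ K, ∀ z ∈ K, δ ≤ z - x →
      ThreePoint C (ξ x) (ξ y) (ξ z) := by
  obtain ⟨ε, hε, hεle⟩ := hK.exists_pos_le_dist_of_le_dist hc hi hδ
  obtain ⟨R, hR, hRle⟩ := (hK.image_of_continuousOn hc).isBounded.exists_pos_norm_le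
  have hbound : ∀ w ∈ K, ∀ v ∈ K, ε / (2 * R) * ‖ξ w - ξ v‖ ≤ ε := fun w hw v hv => by
    have hdiam : ‖ξ w - ξ v‖ ≤ 2 * R := by
      linarith [norm_sub_le (ξ w) (ξ v), hRle _ (mem_image_of_mem ξ hw),
        hRle _ (mem_image_of_mem ξ hv)]
    calc ε / (2 * R) * ‖ξ w - ξ v‖ ≤ ε / (2 * R) * (2 * R) := by gcongr
      _ = ε := by field_simp
  refine ⟨ε / (2 * R), by positivity, fun x hx y hy z hz hxz => ?_⟩
  have hfar : ε ≤ ‖ξ x - ξ z‖ := by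
    rw [← dist_eq_norm, dist_comm]
    exact hεle z hz x hx (by rw [Real.dist_eq, abs_of_nonneg (by linarith)]; exact hxz)
  exact ⟨(hbound x hx y hy).trans hfar, (hbound z hz y hy).trans (norm_sub_rev (ξ x) _ ▸ hfar)⟩

section Window

variable {E : Type*} [NormedAddCommGroup E] [NormedSpace ℝ E] {ξ ξ' : ℝ → E} {a b : ℝ}

theorem exists_norm_sub_le_mul_abs_sub
    (hd : ∀ t ∈ Icc a b, HasDerivWithinAt ξ (ξ' t) (Icc a b) t)
    (hdc : ContinuousOn ξ' (Icc a b)) :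
    ∃ M > 0, ∀ x ∈ Icc a b, ∀ y ∈ Icc a b, ‖ξ y - ξ x‖ ≤ M * |y - x| := by
  obtain ⟨M, hM⟩ := isCompact_Icc.exists_bound_of_continuousOn hdc
  refine ⟨max M 1, by positivity, fun x hx y hy => ?_⟩
  simpa using (convex_Icc a b).norm_image_sub_le_of_norm_hasDerivWithin_le hd
    (fun t ht => (hM t ht).trans (le_max_left M 1)) hx hy

/-- Near the diagonal, `ξ y - ξ x` is close to `(y - x) • ξ' x` because `ξ'` is uniformly
continuous. -/
theorem exists_mul_abs_sub_le_norm_sub_of_abs_sub_lt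
    (hd : ∀ t ∈ Icc a b, HasDerivWithinAt ξ (ξ' t) (Icc a b) t)
    (hd0 : ∀ t ∈ Icc a b, ξ' t ≠ 0) (hdc : ContinuousOn ξ' (Icc a b)) :
    ∃ m > 0, ∃ δ > 0, ∀ x ∈ Icc a b, ∀ y ∈ Icc a b, |y - x| < δ →
      m * |y - x| ≤ ‖ξ y - ξ x‖ := by
  obtain ⟨m, hm, hmle⟩ := isCompact_Icc.exists_forall_le' (continuous_norm.comp_continuousOn hdc)
    (a := 0) fun t ht => norm_pos_iff.2 (hd0 t ht)
  obtain ⟨δ, hδ, hδc⟩ := Metric.uniformContinuousOn_iff.1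
    (isCompact_Icc.uniformContinuousOn_of_continuous hdc) (m / 2) (half_pos hm)
  refine ⟨m / 2, half_pos hm, δ, hδ, fun x hx y hy hxy => ?_⟩
  set s := Icc a b ∩ Metric.ball x δ
  have hys : y ∈ s := ⟨hy, by rwa [Metric.mem_ball, Real.dist_eq]⟩
  have hlin : ‖(ξ y - ξ x) - (y - x) • ξ' x‖ ≤ m / 2 * |y - x| := by
    have := ((convex_Icc a b).inter (convex_ball x δ)).norm_image_sub_le_of_norm_hasDerivWithin_le
      (f := fun t => ξ t - t • ξ' x) (f' := fun t => ξ' t - ξ' x)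
      (fun t ht => ((hd t ht.1).mono inter_subset_left).sub
        (((hasDerivAt_id t).smul_const (ξ' x)).hasDerivWithinAt.congr_deriv (one_smul _ _)))
      (fun t ht => by rw [← dist_eq_norm]; exact (hδc t ht.1 x hx ht.2).le)
      ⟨hx, Metric.mem_ball_self hδ⟩ hys
    rw [Real.norm_eq_abs] at this
    convert this using 2
    simp only [sub_smul]; abel
  have hnorm : m * |y - x| ≤ ‖(y - x) • ξ' x‖ := by
    rw [norm_smul, Real.norm_eq_abs, mul_comm]
    exact mul_le_mul_of_nonneg_left (hmle x hx) (abs_nonneg _)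
  have htri := norm_sub_norm_le ((y - x) • ξ' x) (ξ y - ξ x)
  rw [norm_sub_rev ((y - x) • ξ' x)] at htri
  linarith

theorem exists_mul_abs_sub_le_norm_sub (hi : InjOn ξ (Icc a b))
    (hd : ∀ t ∈ Icc a b, HasDerivWithinAt ξ (ξ' t) (Icc a b) t)
    (hd0 : ∀ t ∈ Icc a b, ξ' t ≠ 0) (hdc : ContinuousOn ξ' (Icc a b)) :
    ∃ m > 0, ∀ x ∈ Icc a b, ∀ y ∈ Icc a b, m * |y - x| ≤ ‖ξ y - ξ x‖ := by
  obtain ⟨m, hm, δ, hδ, hloc⟩ := exists_mul_abs_sub_le_norm_sub_of_abs_sub_lt hd hd0 hdc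
  have hc : ContinuousOn ξ (Icc a b) := fun t ht => (hd t ht).continuousWithinAt
  obtain ⟨ε, hε, hfar⟩ := isCompact_Icc.exists_pos_le_dist_of_le_dist hc hi hδ
  refine ⟨min m (ε / max (b - a) δ), by positivity, fun x hx y hy => ?_⟩
  rcases lt_or_ge |y - x| δ with hxy | hxy
  · exact (mul_le_mul_of_nonneg_right (min_le_left _ _) (abs_nonneg _)).trans (hloc x hx y hy hxy)
  · have hdist : |y - x| ≤ max (b - a) δ := (abs_sub_le_iff.2 ⟨by linarith [hx.1, hy.2],
      by linarith [hx.2, hy.1]⟩).trans (le_max_left _ _)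
    calc min m (ε / max (b - a) δ) * |y - x| ≤ ε / max (b - a) δ * max (b - a) δ := by
          gcongr; exact min_le_right _ _
      _ = ε := by field_simp
      _ ≤ ‖ξ y - ξ x‖ := by
          rw [← dist_eq_norm, dist_comm]; exact hfar x hx y hy (by rwa [Real.dist_eq, abs_sub_comm])

theorem exists_threePointOn_of_hasDerivWithinAt (hi : InjOn ξ (Icc a b))
    (hd : ∀ t ∈ Icc a b, HasDerivWithinAt ξ (ξ' t) (Icc a b) t)
    (hd0 : ∀ t ∈ Icc a b, ξ' t ≠ 0) (hdc : ContinuousOn ξ' (Icc a b)) :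
    ∃ C > 0, ThreePointOn C ξ (Icc a b) := by
  obtain ⟨m, hm, hlow⟩ := exists_mul_abs_sub_le_norm_sub hi hd hd0 hdc
  obtain ⟨M, hM, hup⟩ := exists_norm_sub_le_mul_abs_sub hd hdc
  refine ⟨m / M, by positivity, fun x hx y hy z hz hxy hyz => ?_⟩
  have key : ∀ v ∈ Icc x z, ∀ w ∈ Icc x z, v ≤ w → m / M * ‖ξ w - ξ v‖ ≤ ‖ξ x - ξ z‖ :=
    fun v hv w hw hvw => by
      have hsub : Icc x z ⊆ Icc a b := Icc_subset_Icc hx.1 hz.2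
      calc m / M * ‖ξ w - ξ v‖ ≤ m / M * (M * |w - v|) := by
            gcongr; exact hup v (hsub hv) w (hsub hw)
        _ = m * |w - v| := by field_simp
        _ ≤ m * |z - x| := by
            refine mul_le_mul_of_nonneg_left ?_ hm.le
            rw [abs_of_nonneg (sub_nonneg.2 hvw), abs_of_nonneg (sub_nonneg.2 (hxy.trans hyz))]
            linarith [hv.1, hw.2]
        _ ≤ ‖ξ z - ξ x‖ := hlow x hx z hz
        _ = ‖ξ x - ξ z‖ := norm_sub_rev _ _
  exact ⟨norm_sub_rev (ξ x) _ ▸ key x ⟨le_rfl, hxy.trans hyz⟩ y ⟨hxy, hyz⟩ hxy,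
    norm_sub_rev (ξ x) (ξ z) ▸ key y ⟨hxy, hyz⟩ z ⟨hxy.trans hyz, le_rfl⟩ hyz⟩

theorem exists_threePoint_of_lt_or_lt {a b : ℝ} (ha : a < 0) (hb : 0 < b)
    (hc : ContinuousOn ξ (Icc (-1) 1)) (hi : InjOn ξ (Icc (-1) 1))
    (hd : ∀ t ∈ Icc (-1) 1 \ {0}, HasDerivAt ξ (ξ' t) t)
    (hd0 : ∀ t ∈ Icc (-1) 1 \ {0}, ξ' t ≠ 0) (hdc : ContinuousOn ξ' (Icc (-1) 1 \ {0})) :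
    ∃ C > 0, ∀ x ∈ Icc (-1) 1, ∀ y ∈ Icc (-1) 1, ∀ z ∈ Icc (-1) 1, x ≤ y → y ≤ z →
      (x < a ∨ b < z) → ThreePoint C (ξ x) (ξ y) (ξ z) := by
  have window : ∀ p q, Icc p q ⊆ Icc (-1) 1 \ {0} → ∃ C > 0, ThreePointOn C ξ (Icc p q) :=
    fun p q hpq => exists_threePointOn_of_hasDerivWithinAt (hi.mono (hpq.trans sdiff_subset))
      (fun t ht => (hd t (hpq ht)).hasDerivWithinAt) (fun t ht => hd0 t (hpq ht)) (hdc.mono hpq)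
  obtain ⟨C₁, hC₁, hleft⟩ := window (-1) (a / 2) fun t ht =>
    ⟨⟨ht.1, by linarith [ht.2]⟩, fun h0 => by linarith [ht.2, mem_singleton_iff.1 h0]⟩
  obtain ⟨C₂, hC₂, hright⟩ := window (b / 2) 1 fun t ht =>
    ⟨⟨by linarith [ht.1], ht.2⟩, fun h0 => by linarith [ht.1, mem_singleton_iff.1 h0]⟩
  obtain ⟨C₃, hC₃, hfar⟩ := isCompact_Icc.exists_threePoint_of_le_sub hc hi
    (lt_min (half_pos hb) (by linarith : 0 < -a / 2))
  refine ⟨min C₁ (min C₂ C₃), by positivity, fun x hx y hy z hz hxy hyz hesc => ?_⟩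
  have hC₁' : min C₁ (min C₂ C₃) ≤ C₁ := min_le_left _ _
  have hC₂' : min C₁ (min C₂ C₃) ≤ C₂ := (min_le_right _ _).trans (min_le_left _ _)
  have hC₃' : min C₁ (min C₂ C₃) ≤ C₃ := (min_le_right _ _).trans (min_le_right _ _)
  have hδa : min (b / 2) (-a / 2) ≤ -a / 2 := min_le_right _ _
  have hδb : min (b / 2) (-a / 2) ≤ b / 2 := min_le_left _ _
  rcases hesc with hxa | hbz
  · by_cases hza : z ≤ a / 2
    · exact (hleft x ⟨hx.1, by linarith⟩ y ⟨hy.1, by linarith⟩ z ⟨hz.1, hza⟩ hxy hyz).mono hC₁'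
    · exact (hfar x hx y hy z hz (by linarith)).mono hC₃'
  · by_cases hxb : b / 2 ≤ x
    · exact (hright x ⟨hxb, hx.2⟩ y ⟨by linarith, hy.2⟩ z ⟨by linarith, hz.2⟩ hxy hyz).mono hC₂'
    · exact (hfar x hx y hy z hz (by linarith)).mono hC₃'

end Window

theorem exists_strictMonoOn_semiconj {X : Type*} [TopologicalSpace X] [T2Space X] {ξ : ℝ → X}
    (hc : ContinuousOn ξ (Icc (-1) 1)) (hi : InjOn ξ (Icc (-1) 1)) {g : X → X}
    (hg : Continuous g) (hgi : Function.Injective g)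
    (hgL : MapsTo g (ξ '' Icc (-1) 0) (ξ '' Icc (-1) 0))
    (hgR : MapsTo g (ξ '' Icc 0 1) (ξ '' Icc 0 1)) :
    ∃ h : ℝ → ℝ, ContinuousOn h (Icc (-1) 1) ∧ StrictMonoOn h (Icc (-1) 1) ∧
      MapsTo h (Icc (-1) 1) (Icc (-1) 1) ∧ ∀ t ∈ Icc (-1) 1, ξ (h t) = g (ξ t) := by
  set h := fun t => Function.invFunOn ξ (Icc (-1) 1) (g (ξ t))
  have hpiece : ∀ J ⊆ Icc (-1) 1, MapsTo g (ξ '' J) (ξ '' J) →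
      ∀ t ∈ J, h t ∈ J ∧ ξ (h t) = g (ξ t) := fun J hJ hgJ t ht => by
    obtain ⟨w, hw, hweq⟩ := hgJ (mem_image_of_mem ξ ht)
    have hhw : h t = w := by
      simp only [h]; rw [← hweq, hi.leftInvOn_invFunOn (hJ hw)]
    exact ⟨hhw ▸ hw, by rw [hhw, hweq]⟩
  have hL := hpiece _ (Icc_subset_Icc le_rfl zero_le_one) hgL
  have hR := hpiece _ (Icc_subset_Icc (by norm_num) le_rfl) hgR
  have hI : ∀ t ∈ Icc (-1) 1, h t ∈ Icc (-1) 1 ∧ ξ (h t) = g (ξ t) := fun t ht => by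
    rcases le_total t 0 with ht0 | ht0
    · exact (hL t ⟨ht.1, ht0⟩).imp_left fun hmem => ⟨hmem.1, hmem.2.trans zero_le_one⟩
    · exact (hR t ⟨ht0, ht.2⟩).imp_left fun hmem =>
        ⟨(by norm_num : (-1:ℝ) ≤ 0).trans hmem.1, hmem.2⟩
  have hcont : ContinuousOn h (Icc (-1) 1) :=
    (isCompact_Icc.continuousOn_invFunOn hc hi).comp (hg.comp_continuousOn hc)
      fun t ht => (hI t ht).2 ▸ mem_image_of_mem ξ (hI t ht).1
  have hinj : InjOn h (Icc (-1) 1) := fun s hs t ht hst =>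
    hi hs ht (hgi (by rw [← (hI s hs).2, ← (hI t ht).2, hst]))
  refine ⟨h, hcont, ?_, fun t ht => (hI t ht).1, fun t ht => (hI t ht).2⟩
  refine (hcont.strictMonoOn_of_injOn_Icc' (by norm_num) hinj).resolve_right fun hanti => ?_
  have := hanti (left_mem_Icc.2 (by norm_num)) (right_mem_Icc.2 (by norm_num)) (by norm_num)
  linarith [(hL (-1) ⟨le_rfl, by norm_num⟩).1.2, (hR 1 ⟨zero_le_one, le_rfl⟩).1.1]

theorem StrictMonoOn.iterate {α : Type*} [Preorder α] {f : α → α} {s : Set α}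
    (hf : StrictMonoOn f s) (hmaps : MapsTo f s s) : ∀ n, StrictMonoOn f^[n] s
  | 0 => strictMonoOn_id
  | n + 1 => (hf.iterate hmaps n).comp hf hmaps

theorem iterate_semiconj_mul {α M : Type*} [Monoid M] {h : α → α} {ξ : α → M} {s : Set α}
    {c : M} (hmaps : MapsTo h s s) (hξh : ∀ t ∈ s, ξ (h t) = c * ξ t) :
    ∀ n, ∀ t ∈ s, ξ (h^[n] t) = c ^ n * ξ t
  | 0, t, _ => by rw [pow_zero, one_mul]; rfl
  | n + 1, t, ht => by
    rw [Function.iterate_succ_apply, iterate_semiconj_mul hmaps hξh n (h t) (hmaps ht),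
      hξh t ht, pow_succ, mul_assoc]

section SelfSimilar

variable {ξ : ℝ → ℂ} {h : ℝ → ℝ} {c : ℂ}

/-- Every nonzero parameter eventually leaves `h^[n] '' [-1, 1]`, because `‖ξ‖` is bounded
there by `‖c‖ ^ n` times its maximum. -/
theorem exists_iterate_escape (hc : ContinuousOn ξ (Icc (-1) 1)) (hi : InjOn ξ (Icc (-1) 1))
    (hξ0 : ξ 0 = 0) (hc1 : ‖c‖ < 1) (hh : ContinuousOn h (Icc (-1) 1))
    (hmono : StrictMonoOn h (Icc (-1) 1)) (hmaps : MapsTo h (Icc (-1) 1) (Icc (-1) 1))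
    (hξh : ∀ t ∈ Icc (-1) 1, ξ (h t) = c * ξ t) {s u : ℝ} (hs : s ∈ Icc (-1) 1)
    (hu : u ∈ Icc (-1) 1) (hsu : s < u) :
    ∃ n, ∃ s' ∈ Icc (-1) 1, ∃ u' ∈ Icc (-1) 1, h^[n] s' = s ∧ h^[n] u' = u ∧
      (s' < h (-1) ∨ h 1 < u') := by
  set P : ℕ → Prop := fun n => s ∈ h^[n] '' Icc (-1) 1 ∧ u ∈ h^[n] '' Icc (-1) 1
  have hP0 : P 0 := ⟨⟨s, hs, rfl⟩, ⟨u, hu, rfl⟩⟩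
  have hPn : ∃ n, ¬ P n := by
    obtain ⟨w, hw, hw0, hwP⟩ : ∃ w ∈ Icc (-1) 1, w ≠ 0 ∧ ∀ n, P n → w ∈ h^[n] '' Icc (-1) 1 := by
      by_cases hs0 : s = 0
      · exact ⟨u, hu, (hs0 ▸ hsu).ne', fun _ hn => hn.2⟩
      · exact ⟨s, hs, hs0, fun _ hn => hn.1⟩
    have hξw : 0 < ‖ξ w‖ := norm_pos_iff.2 fun h0 =>
      hw0 (hi hw ⟨by norm_num, by norm_num⟩ (h0.trans hξ0.symm))
    obtain ⟨B, hB⟩ := isCompact_Icc.exists_bound_of_continuousOn hc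
    obtain ⟨n, hn⟩ := exists_pow_lt_of_lt_one (div_pos hξw (hξw.trans_le (hB w hw))) hc1
    refine ⟨n, fun hPn => ?_⟩
    obtain ⟨x, hx, rfl⟩ := hwP n hPn
    rw [lt_div_iff₀ (hξw.trans_le (hB _ hw)), iterate_semiconj_mul hmaps hξh n x hx, norm_mul,
      norm_pow] at hn
    nlinarith [hB x hx, norm_nonneg (ξ x), pow_nonneg (norm_nonneg c) n]
  obtain ⟨k, ⟨⟨s', hs', rfl⟩, ⟨u', hu', rfl⟩⟩, hk⟩ : ∃ k, P k ∧ ¬ P (k + 1) := by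
    by_contra! H
    obtain ⟨n, hn⟩ := hPn
    exact hn (Nat.rec hP0 H n)
  refine ⟨k, s', hs', u', hu', rfl, rfl, ?_⟩
  by_contra! H
  have hsu' : s' < u' := ((hmono.iterate hmaps k).lt_iff_lt hs' hu').1 hsu
  have hIcc : Icc (h (-1)) (h 1) ⊆ h '' Icc (-1) 1 := intermediate_value_Icc (by norm_num) hh
  simp only [P, Function.iterate_succ, image_comp] at hk
  exact hk ⟨mem_image_of_mem _ (hIcc ⟨H.1, hsu'.le.trans H.2⟩),
    mem_image_of_mem _ (hIcc ⟨H.1.trans hsu'.le, H.2⟩)⟩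

theorem exists_threePointOn_of_selfSimilar {ξ' : ℝ → ℂ} (hc : ContinuousOn ξ (Icc (-1) 1))
    (hi : InjOn ξ (Icc (-1) 1)) (hξ0 : ξ 0 = 0)
    (hd : ∀ t ∈ Icc (-1) 1 \ {0}, HasDerivAt ξ (ξ' t) t)
    (hd0 : ∀ t ∈ Icc (-1) 1 \ {0}, ξ' t ≠ 0) (hdc : ContinuousOn ξ' (Icc (-1) 1 \ {0}))
    (hc1 : ‖c‖ < 1) (hh : ContinuousOn h (Icc (-1) 1)) (hmono : StrictMonoOn h (Icc (-1) 1))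
    (hmaps : MapsTo h (Icc (-1) 1) (Icc (-1) 1)) (hξh : ∀ t ∈ Icc (-1) 1, ξ (h t) = c * ξ t) :
    ∃ C > 0, ThreePointOn C ξ (Icc (-1) 1) := by
  have hm1 : (-1 : ℝ) ∈ Icc (-1) 1 := left_mem_Icc.2 (by norm_num)
  have h0 : (0 : ℝ) ∈ Icc (-1) 1 := ⟨by norm_num, by norm_num⟩
  have h1 : (1 : ℝ) ∈ Icc (-1) 1 := right_mem_Icc.2 (by norm_num)
  have hfix : h 0 = 0 := hi (hmaps h0) h0 (by rw [hξh 0 h0, hξ0, mul_zero])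
  obtain ⟨C, hC, hesc⟩ := exists_threePoint_of_lt_or_lt (hfix ▸ hmono hm1 h0 (by norm_num))
    (hfix ▸ hmono h0 h1 (by norm_num)) hc hi hd hd0 hdc
  refine ⟨C, hC, fun x hx y hy z hz hxy hyz => ?_⟩
  rcases (hxy.trans hyz).eq_or_lt with hxz | hxz
  · obtain rfl : x = y := le_antisymm hxy (hxz ▸ hyz)
    subst hxz
    simp [ThreePoint]
  obtain ⟨n, x', hx', z', hz', rfl, rfl, hesc'⟩ :=
    exists_iterate_escape hc hi hξ0 hc1 hh hmono hmaps hξh hx hz hxz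
  have hsub : Icc x' z' ⊆ Icc (-1) 1 := Icc_subset_Icc hx'.1 hz'.2
  obtain ⟨y', hy', rfl⟩ := intermediate_value_Icc
    (((hmono.iterate hmaps n).lt_iff_lt hx' hz').1 hxz).le ((hh.iterate hmaps n).mono hsub)
    ⟨hxy, hyz⟩
  rw [iterate_semiconj_mul hmaps hξh n x' hx', iterate_semiconj_mul hmaps hξh n y' (hsub hy'),
    iterate_semiconj_mul hmaps hξh n z' hz']
  exact (hesc x' hx' y' (hsub hy') z' hz' hy'.1 hy'.2 hesc').smul (c ^ n)

end SelfSimilar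

theorem mapsTo_inv_mul_of_subset_image_mul {G₀ : Type*} [GroupWithZero G₀] {S : Set G₀} {c : G₀}
    (hc : c ≠ 0) (hS : S ⊆ (fun z => c * z) '' S) : MapsTo (fun z => c⁻¹ * z) S S := fun z hz => by
  obtain ⟨w, hw, rfl⟩ := hS hz
  simpa only [inv_mul_cancel_left₀ hc] using hw

theorem quasiArc_of_invariant_smooth_arcs_general
    (R' L' : Set ℂ)
    (lam : ℂ) (hlam : 1 < ‖lam‖)
    (hinvR : R' ⊆ (fun z => lam * z) '' R')
    (hinvL : L' ⊆ (fun z => lam * z) '' L')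
    (hsmooth : ∃ ξ : ℝ → ℂ,
      ContinuousOn ξ (Icc (-1) 1) ∧ InjOn ξ (Icc (-1) 1) ∧
      ξ '' Icc (-1) 1 = R' ∪ L' ∧ ξ 0 = 0 ∧
      ξ '' Icc 0 1 = R' ∧ ξ '' Icc (-1) 0 = L' ∧
      (∀ t ∈ Icc (-1:ℝ) 1, t ≠ 0 → HasDerivAt ξ (deriv ξ t) t ∧ deriv ξ t ≠ 0) ∧
      ContinuousOn (deriv ξ) (Icc (-1) 1 \ {0})) :
    IsQuasiArc (R' ∪ L') := by
  obtain ⟨ξ, hc, hi, hA, hξ0, hξR, hξL, hd, hdc⟩ := hsmooth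
  have hlam0 : lam ≠ 0 := norm_pos_iff.1 (one_pos.trans hlam)
  obtain ⟨h, hh, hmono, hmaps, hξh⟩ := exists_strictMonoOn_semiconj hc hi
    (continuous_const_mul lam⁻¹) (mul_right_injective₀ (inv_ne_zero hlam0))
    (hξL ▸ mapsTo_inv_mul_of_subset_image_mul hlam0 hinvL)
    (hξR ▸ mapsTo_inv_mul_of_subset_image_mul hlam0 hinvR)
  obtain ⟨C, hC, hξC⟩ := exists_threePointOn_of_selfSimilar hc hi hξ0
    (fun t ht => (hd t ht.1 ht.2).1) (fun t ht => (hd t ht.1 ht.2).2) hdc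
    (by rwa [norm_inv, inv_lt_one₀ (one_pos.trans hlam)]) hh hmono hmaps hξh
  rw [← hA]
  exact isQuasiArc_image_of_threePointOn (by norm_num) hc hi hC hξC

/-- simple arcs `R'`, `L'` with common endpoint `0`, otherwise disjoint,
with `λ R' ⊇ R'` and `λ L' ⊇ L'` for some `|λ| > 1`, whose union is smooth except
possibly at `0`, form a quasi-arc `R' ∪ L'`. -/
theorem quasiArc_of_invariant_smooth_arcs
    (R' L' : Set ℂ)
    (hR : IsArcEndpoint 0 R') (hL : IsArcEndpoint 0 L')
    (hRL : R' ∩ L' = {0})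
    (lam : ℂ) (hlam : 1 < ‖lam‖)
    (hinvR : R' ⊆ (fun z => lam * z) '' R')
    (hinvL : L' ⊆ (fun z => lam * z) '' L')
    (hsmooth : ∃ ξ : ℝ → ℂ,
      ContinuousOn ξ (Icc (-1) 1) ∧ InjOn ξ (Icc (-1) 1) ∧
      ξ '' Icc (-1) 1 = R' ∪ L' ∧ ξ 0 = 0 ∧
      ξ '' Icc 0 1 = R' ∧ ξ '' Icc (-1) 0 = L' ∧
      (∀ t ∈ Icc (-1:ℝ) 1, t ≠ 0 → HasDerivAt ξ (deriv ξ t) t ∧ deriv ξ t ≠ 0) ∧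
      ContinuousOn (deriv ξ) (Icc (-1) 1 \ {0})) :
    IsQuasiArc (R' ∪ L') :=
  quasiArc_of_invariant_smooth_arcs_general R' L' lam hlam hinvR hinvL hsmooth
end
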